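/- Let T(G) be the generic tree added by Q_{κ,δ} (κ 2-Mahlo, δ < κ regular). For every condition ⟨t, f⃗⟩ ∈ Q_{κ,δ} and every α with ht(t) ≤ α < κ, there is an extension ⟨t', f⃗'⟩ ≤ ⟨t, f⃗⟩ with ht(t') > α; i.e., the set of conditions of height > α is dense, so T(G) has height κ. -/

import Mathlib

universe u

/-- A node of the binary tree `2^{<κ}`: a binary sequence of some ordinal length. -/
def BNode : Type (u + 1) :=
  Σ β : Ordinal.{u}, ({x : Ordinal.{u} // x < β} → Bool)

/-- The height (level) of a node is its length. -/
def BNode.ht (s : BNode.{u}) : Ordinal.{u} := s.1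

/-- The restriction of a node to a smaller length. -/
def BNode.restrict (t : BNode.{u}) (β : Ordinal.{u}) (h : β ≤ t.1) : BNode.{u} :=
  ⟨β, fun x => t.2 ⟨x.1, lt_of_lt_of_le x.2 h⟩⟩

/-- Tree order on nodes: end extension. -/
def BNode.le (s t : BNode.{u}) : Prop :=
  s.1 ≤ t.1 ∧ ∀ x : {x : Ordinal.{u} // x < s.1}, ∀ hx : x.1 < t.1, s.2 x = t.2 ⟨x.1, hx⟩

/-- Strict tree order on nodes. -/
def BNode.slt (s t : BNode.{u}) : Prop := BNode.le s t ∧ s.1 < t.1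

/-- Replace the initial segment of `t` of length `s₁.1` by `s₁` ("swapping stems"). -/
noncomputable def BNode.swap (s₁ t : BNode.{u}) (h : s₁.1 ≤ t.1) : BNode.{u} :=
  ⟨t.1, fun x => if hx : x.1 < s₁.1 then s₁.2 ⟨x.1, hx⟩ else t.2 x⟩

/-- `C` is club in `κ`: unbounded in `κ` and closed under suprema below `κ`. -/
def IsClubIn (C : Set Ordinal.{u}) (κ : Ordinal.{u}) : Prop :=
  (∀ α < κ, ∃ β ∈ C, α < β ∧ β < κ) ∧
    ∀ α < κ, (0 : Ordinal.{u}) < α →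
      (∀ β < α, ∃ γ ∈ C, β < γ ∧ γ < α) → α ∈ C

/-- `S` is stationary in `κ`: it meets every club subset of `κ`. -/
def IsStationaryIn (S : Set Ordinal.{u}) (κ : Ordinal.{u}) : Prop :=
  ∀ C : Set Ordinal.{u}, IsClubIn C κ → ∃ x, x ∈ S ∧ x ∈ C ∧ x < κ

/-- `κ` is Mahlo: inaccessible, and the regular cardinals below `κ` are stationary. -/
def IsMahlo (κ : Cardinal.{u}) : Prop :=
  κ.IsInaccessible ∧
    IsStationaryIn {o : Ordinal.{u} | o.card.IsRegular ∧ o.card.ord = o} κ.ord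

/-- `κ` is 2-Mahlo: Mahlo, and the Mahlo cardinals below `κ` are stationary. -/
def Is2Mahlo (κ : Cardinal.{u}) : Prop :=
  IsMahlo κ ∧ IsStationaryIn {o : Ordinal.{u} | IsMahlo o.card ∧ o.card.ord = o} κ.ord

/-- A condition of Gitik's forcing `Q_{κ,δ}`: a normal homogeneous subtree of `2^{<κ}`
of successor height `top + 1 < κ`, together with a `δ`-ascent path `f` through it. -/
structure QCond (κ δ : Ordinal.{u}) : Type (u + 1) where
  /-- the top level of the tree; the tree has successor height `top + 1`. -/
  top : Ordinal.{u}
  top_lt : top + 1 < κ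
  /-- the tree. -/
  T : Set BNode.{u}
  mem_ht : ∀ t ∈ T, BNode.ht t < top + 1
  levels_nonempty : ∀ α < top + 1, ∃ t ∈ T, BNode.ht t = α
  downward_closed : ∀ t ∈ T, ∀ β : Ordinal.{u}, ∀ h : β ≤ BNode.ht t,
    BNode.restrict t β h ∈ T
  /-- normality: every node extends to every higher level below the height. -/
  normal : ∀ t ∈ T, ∀ α : Ordinal.{u}, BNode.ht t ≤ α → α < top + 1 →
    ∃ s ∈ T, BNode.ht s = α ∧ BNode.le t s
  /-- homogeneity: the cone above a node is invariant under swapping stems on a level. -/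
  homog : ∀ s₀ ∈ T, ∀ s₁ ∈ T, BNode.ht s₀ = BNode.ht s₁ →
    ∀ t ∈ T, BNode.le s₀ t → ∀ h : BNode.ht s₁ ≤ BNode.ht t, BNode.swap s₁ t h ∈ T
  /-- the `δ`-ascent path. -/
  f : Ordinal.{u} → Ordinal.{u} → BNode.{u}
  f_mem : ∀ α < top + 1, ∀ υ < δ, f α υ ∈ T ∧ BNode.ht (f α υ) = α
  f_ascent : ∀ α β : Ordinal.{u}, α < β → β < top + 1 →
    ∃ ξ < δ, ∀ υ : Ordinal.{u}, ξ ≤ υ → υ < δ → BNode.slt (f α υ) (f β υ)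

/-- The order on `Q_{κ,δ}`: end extension of the tree and of the ascent path. -/
def QLe {κ δ : Ordinal.{u}} (p q : QCond.{u} κ δ) : Prop :=
  q.top ≤ p.top ∧ q.T = {t ∈ p.T | BNode.ht t < q.top + 1} ∧
    ∀ α ≤ q.top, ∀ υ < δ, p.f α υ = q.f α υ

/-- A condition of the dense set `R₀` in `Q_{κ,δ} * Ḟ_{κ,δ}`: a condition `⟨t, f⃗⟩` of
`Q_{κ,δ}` together with `g = ⟨f_{ht(t)-1}, ξ⟩` for some `ξ < δ`, the `F`-part acting at
the top level of the tree. -/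
structure RCond (κ δ : Ordinal.{u}) extends QCond.{u} κ δ : Type (u + 1) where
  /-- the starting point of the `F_{κ,δ}`-condition. -/
  ξ : Ordinal.{u}
  ξ_lt : ξ < δ

/-- The order on `R₀`: extension in `Q_{κ,δ}`, equality of the `ξ`'s, and coordinatewise
tree-extension of the top functions above `ξ`. -/
def RLe {κ δ : Ordinal.{u}} (p q : RCond.{u} κ δ) : Prop :=
  QLe p.toQCond q.toQCond ∧ p.ξ = q.ξ ∧
    ∀ υ : Ordinal.{u}, p.ξ ≤ υ → υ < δ → BNode.le (q.f q.top υ) (p.f p.top υ)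

/-!
Extend a condition by padding every node of its top level with zeros up to each height
`≤ α`. Zero padding commutes with swapping stems, so the new tree is still normal and
homogeneous, and padding the top nodes of the ascent path by zeros continues it: above the
old top level the padded path ascends from index `0` on.
-/

namespace BNode

theorem ext {s t : BNode.{u}} (h1 : s.1 = t.1)
    (h2 : ∀ x : {x : Ordinal.{u} // x < s.1}, ∀ hx : x.1 < t.1, s.2 x = t.2 ⟨x.1, hx⟩) :
    s = t := by
  obtain ⟨a, f⟩ := s
  obtain ⟨b, g⟩ := t
  dsimp only at h1
  subst h1
  congr
  exact funext fun x => h2 x x.2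

theorem le_refl (t : BNode.{u}) : t.le t :=
  ⟨le_rfl, fun _ _ => rfl⟩

theorem le_trans {s t w : BNode.{u}} (h1 : s.le t) (h2 : t.le w) : s.le w :=
  ⟨h1.1.trans h2.1, fun x hx =>
    (h1.2 x (lt_of_lt_of_le x.2 h1.1)).trans (h2.2 ⟨x.1, lt_of_lt_of_le x.2 h1.1⟩ hx)⟩

theorem slt_of_slt_of_le {s t w : BNode.{u}} (h1 : s.slt t) (h2 : t.le w) : s.slt w :=
  ⟨le_trans h1.1 h2, lt_of_lt_of_le h1.2 h2.1⟩

noncomputable def padZero (t : BNode.{u}) (β : Ordinal.{u}) : BNode.{u} :=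
  ⟨β, fun x => if hx : x.1 < t.1 then t.2 ⟨x.1, hx⟩ else false⟩

theorem restrict_padZero (t : BNode.{u}) {β γ : Ordinal.{u}} (h : γ ≤ (t.padZero β).ht) :
    (t.padZero β).restrict γ h = t.padZero γ := rfl

theorem padZero_eq_restrict {t : BNode.{u}} {β : Ordinal.{u}} (h : β ≤ t.ht) :
    t.padZero β = t.restrict β h :=
  ext rfl fun x _ => dif_pos (lt_of_lt_of_le x.2 h)

theorem padZero_ht (t : BNode.{u}) : t.padZero t.ht = t :=
  ext rfl fun x _ => dif_pos x.2

theorem le_padZero_of_le {s t : BNode.{u}} {β : Ordinal.{u}} (hst : s.le t) (hs : s.ht ≤ β) :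
    s.le (t.padZero β) :=
  ⟨hs, fun x _ => by
    have hxt : x.1 < t.1 := lt_of_lt_of_le x.2 hst.1
    simp only [padZero, dif_pos hxt]
    exact hst.2 x hxt⟩

theorem padZero_le_padZero (t : BNode.{u}) {β γ : Ordinal.{u}} (h : β ≤ γ) :
    (t.padZero β).le (t.padZero γ) :=
  ⟨h, fun _ _ => rfl⟩

theorem le_of_le_padZero {s t : BNode.{u}} {β : Ordinal.{u}} (h : s.le (t.padZero β))
    (hs : s.ht ≤ t.ht) : s.le t :=
  ⟨hs, fun x hx => (h.2 x (lt_of_lt_of_le x.2 h.1)).trans (dif_pos hx)⟩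

theorem swap_padZero {s t : BNode.{u}} {β : Ordinal.{u}} (hst : s.ht ≤ t.ht)
    (h : s.ht ≤ (t.padZero β).ht) :
    swap s (t.padZero β) h = (swap s t hst).padZero β := by
  refine ext rfl fun x _ => ?_
  simp only [swap, padZero]
  by_cases hs : x.1 < s.1
  · simp only [hs, dite_true]
    rw [dif_pos (show x.1 < t.1 from lt_of_lt_of_le hs hst)]
  · simp only [hs, dite_false]

theorem swap_padZero_padZero {s t : BNode.{u}} {β γ : Ordinal.{u}} (hst : s.ht = t.ht)
    (hγ : s.ht ≤ γ) (h : (s.padZero γ).ht ≤ (t.padZero β).ht) :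
    swap (s.padZero γ) (t.padZero β) h = s.padZero β := by
  refine ext rfl fun x _ => ?_
  simp only [swap, padZero]
  by_cases hx : x.1 < γ
  · simp only [hx, dite_true]
  · have hxs : ¬ x.1 < s.1 := fun hc => hx (lt_of_lt_of_le hc hγ)
    have hxt : ¬ x.1 < t.1 := fun hc => hxs (lt_of_lt_of_le hc hst.ge)
    simp only [hx, hxs, hxt, dite_false]

end BNode

open BNode

namespace QCond

variable {κ δ : Ordinal.{u}} (p : QCond.{u} κ δ) (α : Ordinal.{u})

theorem ht_le_top {t : BNode.{u}} (ht : t ∈ p.T) : t.ht ≤ p.top :=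
  Order.lt_add_one_iff.1 (p.mem_ht t ht)

def padTree : Set BNode.{u} :=
  p.T ∪ {s | ∃ t ∈ p.T, t.ht = p.top ∧ ∃ β, p.top < β ∧ β ≤ α ∧ s = t.padZero β}

noncomputable def padPath (β υ : Ordinal.{u}) : BNode.{u} :=
  if β ≤ p.top then p.f β υ else (p.f p.top υ).padZero β

variable {p α}

theorem mem_of_mem_padTree {s : BNode.{u}} (hs : s ∈ p.padTree α) (hle : s.ht ≤ p.top) :
    s ∈ p.T := by
  rcases hs with hs | ⟨t, -, -, β, hβ, -, rfl⟩
  · exact hs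
  · exact absurd hle (not_le.2 hβ)

theorem padTree_sep_ht_lt :
    {t ∈ p.padTree α | t.ht < p.top + 1} = p.T := by
  ext t
  refine ⟨fun ht => mem_of_mem_padTree ht.1 (Order.lt_add_one_iff.1 ht.2), fun ht => ?_⟩
  exact ⟨Or.inl ht, p.mem_ht t ht⟩

theorem padZero_mem_padTree {t : BNode.{u}} (ht : t ∈ p.T) (htop : t.ht = p.top)
    {β : Ordinal.{u}} (hβ : β ≤ α) : t.padZero β ∈ p.padTree α := by
  rcases le_or_gt β p.top with hle | hlt
  · rw [padZero_eq_restrict (htop ▸ hle)]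
    exact Or.inl (p.downward_closed t ht β _)
  · exact Or.inr ⟨t, ht, htop, β, hlt, hβ, rfl⟩

theorem ht_le_of_mem_padTree (hpα : p.top ≤ α) {s : BNode.{u}} (hs : s ∈ p.padTree α) :
    s.ht ≤ α := by
  rcases hs with hs | ⟨t, -, -, β, -, hβ, rfl⟩
  · exact (p.ht_le_top hs).trans hpα
  · exact hβ

theorem padTree_levels_nonempty {β : Ordinal.{u}} (hβ : β ≤ α) :
    ∃ t ∈ p.padTree α, t.ht = β := by
  obtain ⟨t, ht, htop⟩ := p.levels_nonempty p.top (Order.lt_add_one_iff.2 le_rfl)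
  exact ⟨t.padZero β, padZero_mem_padTree ht htop hβ, rfl⟩

theorem padTree_downward_closed {t : BNode.{u}} (ht : t ∈ p.padTree α) {β : Ordinal.{u}}
    (hβ : β ≤ t.ht) : t.restrict β hβ ∈ p.padTree α := by
  rcases ht with ht | ⟨t₀, ht₀, htop, γ, -, hγ, rfl⟩
  · exact Or.inl (p.downward_closed t ht β hβ)
  · rw [restrict_padZero]
    exact padZero_mem_padTree ht₀ htop (hβ.trans hγ)

theorem padTree_normal {t : BNode.{u}} (ht : t ∈ p.padTree α) {β : Ordinal.{u}}
    (htβ : t.ht ≤ β) (hβ : β ≤ α) : ∃ s ∈ p.padTree α, s.ht = β ∧ t.le s := by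
  rcases ht with ht | ⟨t₀, ht₀, htop, γ, -, -, rfl⟩
  · obtain ⟨s, hs, hsTop, hts⟩ :=
      p.normal t ht p.top (p.ht_le_top ht) (Order.lt_add_one_iff.2 le_rfl)
    exact ⟨s.padZero β, padZero_mem_padTree hs hsTop hβ, rfl, le_padZero_of_le hts htβ⟩
  · exact ⟨t₀.padZero β, padZero_mem_padTree ht₀ htop hβ, rfl, padZero_le_padZero t₀ htβ⟩

theorem padTree_homog {s₀ s₁ t : BNode.{u}} (hs₀ : s₀ ∈ p.padTree α)
    (hs₁ : s₁ ∈ p.padTree α) (hs : s₀.ht = s₁.ht) (ht : t ∈ p.padTree α) (hst : s₀.le t)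
    (h : s₁.ht ≤ t.ht) : swap s₁ t h ∈ p.padTree α := by
  rcases ht with ht | ⟨t₀, ht₀, htop, β, hβ, hβα, rfl⟩
  · have hs₀top : s₀.ht ≤ p.top := hst.1.trans (p.ht_le_top ht)
    exact Or.inl (p.homog s₀ (mem_of_mem_padTree hs₀ hs₀top) s₁
      (mem_of_mem_padTree hs₁ (hs ▸ hs₀top)) hs t ht hst h)
  by_cases hs₁top : s₁.ht ≤ p.top
  · have hs₀top : s₀.ht ≤ t₀.ht := htop ▸ hs ▸ hs₁top
    have hs₁t₀ : s₁.ht ≤ t₀.ht := htop ▸ hs₁top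
    rw [swap_padZero hs₁t₀]
    refine padZero_mem_padTree (t := swap s₁ t₀ hs₁t₀) ?_ htop hβα
    exact p.homog s₀ (mem_of_mem_padTree hs₀ (hs ▸ hs₁top)) s₁
      (mem_of_mem_padTree hs₁ hs₁top) hs t₀ ht₀ (le_of_le_padZero hst hs₀top) hs₁t₀
  · rcases hs₁ with hs₁ | ⟨s, hs₁', hsTop, γ, hγ, -, rfl⟩
    · exact absurd (p.ht_le_top hs₁) hs₁top
    · rw [swap_padZero_padZero (hsTop.trans htop.symm) (hsTop ▸ hγ.le)]
      exact padZero_mem_padTree hs₁' hsTop hβα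

theorem padPath_of_le_top {β υ : Ordinal.{u}} (hβ : β ≤ p.top) : p.padPath β υ = p.f β υ :=
  if_pos hβ

theorem padPath_of_top_le {β υ : Ordinal.{u}} (hβ : p.top ≤ β) (hυ : υ < δ) :
    p.padPath β υ = (p.f p.top υ).padZero β := by
  rcases hβ.lt_or_eq with hlt | rfl
  · exact if_neg (not_le.2 hlt)
  · have hht := (p.f_mem p.top (Order.lt_add_one_iff.2 le_rfl) υ hυ).2
    calc p.padPath p.top υ = p.f p.top υ := padPath_of_le_top le_rfl
      _ = (p.f p.top υ).padZero (p.f p.top υ).ht := (padZero_ht _).symm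
      _ = (p.f p.top υ).padZero p.top := by rw [hht]

theorem padPath_mem {β υ : Ordinal.{u}} (hβ : β ≤ α) (hυ : υ < δ) :
    p.padPath β υ ∈ p.padTree α ∧ (p.padPath β υ).ht = β := by
  have hftop := p.f_mem p.top (Order.lt_add_one_iff.2 le_rfl) υ hυ
  rcases le_total β p.top with hle | hle
  · rw [padPath_of_le_top hle]
    exact (p.f_mem β (Order.lt_add_one_iff.2 hle) υ hυ).imp_left Or.inl
  · rw [padPath_of_top_le hle hυ]
    exact ⟨padZero_mem_padTree hftop.1 hftop.2 hβ, rfl⟩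

theorem padPath_ascent (hδ : 0 < δ) {β₁ β₂ : Ordinal.{u}} (hlt : β₁ < β₂) :
    ∃ ξ < δ, ∀ υ, ξ ≤ υ → υ < δ → (p.padPath β₁ υ).slt (p.padPath β₂ υ) := by
  have htop := Order.lt_add_one_iff.2 (le_rfl : p.top ≤ p.top)
  rcases le_or_gt p.top β₁ with h₁ | h₁
  · -- above the old top level both nodes pad the same node
    refine ⟨0, hδ, fun υ _ hυ => ?_⟩
    rw [padPath_of_top_le h₁ hυ, padPath_of_top_le (h₁.trans hlt.le) hυ]
    exact ⟨padZero_le_padZero _ hlt.le, hlt⟩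
  rcases le_total β₂ p.top with h₂ | h₂
  · obtain ⟨ξ, hξ, hasc⟩ := p.f_ascent β₁ β₂ hlt (Order.lt_add_one_iff.2 h₂)
    refine ⟨ξ, hξ, fun υ hξυ hυ => ?_⟩
    rw [padPath_of_le_top h₁.le, padPath_of_le_top h₂]
    exact hasc υ hξυ hυ
  · obtain ⟨ξ, hξ, hasc⟩ := p.f_ascent β₁ p.top h₁ htop
    refine ⟨ξ, hξ, fun υ hξυ hυ => ?_⟩
    rw [padPath_of_le_top h₁.le, padPath_of_top_le h₂ hυ]
    refine slt_of_slt_of_le (hasc υ hξυ hυ) (le_padZero_of_le (BNode.le_refl _) ?_)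
    exact (p.f_mem p.top htop υ hυ).2.trans_le h₂

variable (p)

noncomputable def padTop (hpα : p.top ≤ α) (hακ : α + 1 < κ) (hδ : 0 < δ) : QCond.{u} κ δ where
  top := α
  top_lt := hακ
  T := p.padTree α
  mem_ht _ ht := Order.lt_add_one_iff.2 (ht_le_of_mem_padTree hpα ht)
  levels_nonempty _ hβ := padTree_levels_nonempty (Order.lt_add_one_iff.1 hβ)
  downward_closed _ ht _ hβ := padTree_downward_closed ht hβ
  normal _ ht _ htβ hβ := padTree_normal ht htβ (Order.lt_add_one_iff.1 hβ)
  homog _ hs₀ _ hs₁ hs _ ht hst h := padTree_homog hs₀ hs₁ hs ht hst h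
  f := p.padPath
  f_mem _ hβ _ hυ := padPath_mem (Order.lt_add_one_iff.1 hβ) hυ
  f_ascent _ _ hlt _ := padPath_ascent hδ hlt

theorem padTop_le (hpα : p.top ≤ α) (hακ : α + 1 < κ) (hδ : 0 < δ) :
    QLe (p.padTop hpα hακ hδ) p :=
  ⟨hpα, padTree_sep_ht_lt.symm, fun _ hβ _ _ => padPath_of_le_top hβ⟩

end QCond

theorem QCond_tall_dense_general (κ δ : Cardinal.{u})
    (h2M : Is2Mahlo κ) (hδ : δ.IsRegular) :
    ∀ p : QCond.{u} κ.ord δ.ord, ∀ α : Ordinal.{u}, p.top + 1 ≤ α → α < κ.ord →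
      ∃ q : QCond.{u} κ.ord δ.ord, QLe q p ∧ α < q.top + 1 := by
  intro p α hpα hακ
  have hακ' : α + 1 < κ.ord := (Cardinal.isSuccLimit_ord h2M.1.1.1.le).add_one_lt hακ
  have htop : p.top ≤ α := (Order.lt_add_one_iff.2 le_rfl).le.trans hpα
  exact ⟨p.padTop htop hακ' hδ.ord_pos, p.padTop_le htop hακ' hδ.ord_pos,
    Order.lt_add_one_iff.2 le_rfl⟩

/-- For every condition `⟨t, f⃗⟩ ∈ Q_{κ,δ}` (`κ` 2-Mahlo, `δ < κ` regular) and every `α`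
with `ht(t) ≤ α < κ`, there is an extension `⟨t', f⃗'⟩ ≤ ⟨t, f⃗⟩` with `ht(t') > α`;
i.e. the set of conditions of height `> α` is dense, so the generic tree `T(G)` has
height `κ`. -/
theorem QCond_tall_dense (κ δ : Cardinal.{u})
    (h2M : Is2Mahlo κ) (hδ : δ.IsRegular) (hδκ : δ < κ) :
    ∀ p : QCond.{u} κ.ord δ.ord, ∀ α : Ordinal.{u}, p.top + 1 ≤ α → α < κ.ord →
      ∃ q : QCond.{u} κ.ord δ.ord, QLe q p ∧ α < q.top + 1 :=
  QCond_tall_dense_general κ δ h2M hδ
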